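/- arXiv:1810.13180 — 2 statements merged into one kernel-verified Lean document; each statement's English description precedes it below -/
import Mathlib

section
/- (Strong maximum principle for the road-field system.) Let λ ∈ ℝ and let (u, v₁, v₂) be a nonnegative triple, with u C² on ℝ and v₁, v₂ C² up to the boundary of the half-plane, satisfying L₀(u,v₁,v₂) + λu ≤ 0 on ℝ, L_i(v_i) + λv_i ≤ 0 on ℝ × (0,∞), and B_i(u,v_i) ≤ 0 on ℝ, for i = 1, 2. Then either (u, v₁, v₂) is identically (0,0,0), or u > 0 everywhere on ℝ and v_i > 0 everywhere on ℝ × [0,∞) for i = 1, 2. -/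
open Set MeasureTheory Filter

noncomputable section

/-- Partial derivative in the first (horizontal) variable. -/
def pdx (v : ℝ × ℝ → ℝ) (x y : ℝ) : ℝ := deriv (fun t => v (t, y)) x

/-- Partial derivative in the second (vertical) variable. -/
def pdy (v : ℝ × ℝ → ℝ) (x y : ℝ) : ℝ := deriv (fun t => v (x, t)) y

/-- The Laplacian of `v` at `(x, y)`. -/
def lap (v : ℝ × ℝ → ℝ) (x y : ℝ) : ℝ :=
  deriv (fun t => pdx v t y) x + deriv (fun t => pdy v x t) y

/-- The closed upper half-plane `ℝ × [0, ∞)`. -/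
def HP : Set (ℝ × ℝ) := {p | 0 ≤ p.2}

/-- The road interval `I_R = (-R, R)`. -/
def IR (R : ℝ) : Set ℝ := Ioo (-R) R

/-- The truncated field `Ω_R = B_R ∩ (ℝ × (0, ∞))` (Euclidean disk). -/
def OmR (R : ℝ) : Set (ℝ × ℝ) := {p | p.1 ^ 2 + p.2 ^ 2 < R ^ 2 ∧ 0 < p.2}

/-- `a` is bounded on the closed half-plane. -/
def BddHP (a : ℝ × ℝ → ℝ) : Prop := ∃ M, ∀ p ∈ HP, |a p| ≤ M

/-- `a` is locally Lipschitz continuous on the closed half-plane. -/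
def LocLipHP (a : ℝ × ℝ → ℝ) : Prop :=
  ∀ p ∈ HP, ∃ K : NNReal, ∃ ε : ℝ, 0 < ε ∧ LipschitzOnWith K a (HP ∩ Metric.ball p ε)

/-- The road operator `L₀(u,v₁,v₂) = D u'' + c u' + ν₁ v₁|_{y=0} + ν₂ v₂|_{y=0} - (μ₁+μ₂) u`. -/
def L0 (D c ν₁ ν₂ μ₁ μ₂ : ℝ) (u : ℝ → ℝ) (v₁ v₂ : ℝ × ℝ → ℝ) (x : ℝ) : ℝ :=
  D * deriv (deriv u) x + c * deriv u x + ν₁ * v₁ (x, 0) + ν₂ * v₂ (x, 0)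
    - (μ₁ + μ₂) * u x

/-- The field operator `L_i(v) = d_i Δv + c_i ∂ₓ v + a_i v`. -/
def Lf (d ci : ℝ) (a : ℝ × ℝ → ℝ) (v : ℝ × ℝ → ℝ) (x y : ℝ) : ℝ :=
  d * lap v x y + ci * pdx v x y + a (x, y) * v (x, y)

/-- The exchange (boundary) operator `B_i(u,v) = d_i ∂_y v|_{y=0} + μ_i u - ν_i v|_{y=0}`. -/
def Bf (d μi νi : ℝ) (u : ℝ → ℝ) (v : ℝ × ℝ → ℝ) (x : ℝ) : ℝ :=
  d * pdy v x 0 + μi * u x - νi * v (x, 0)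

/-- The admissible set defining the generalized principal eigenvalue `λ₁`. -/
def glSet (D d₁ d₂ ν₁ ν₂ μ₁ μ₂ c c₁ c₂ : ℝ) (a₁ a₂ : ℝ × ℝ → ℝ) : Set ℝ :=
  {lam | ∃ u : ℝ → ℝ, ∃ v₁ v₂ : ℝ × ℝ → ℝ,
    ContDiff ℝ 2 u ∧ ContDiff ℝ 2 v₁ ∧ ContDiff ℝ 2 v₂ ∧
    (∀ x, 0 ≤ u x) ∧ (∀ p ∈ HP, 0 ≤ v₁ p) ∧ (∀ p ∈ HP, 0 ≤ v₂ p) ∧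
    ¬((∀ x, u x = 0) ∧ (∀ p ∈ HP, v₁ p = 0) ∧ (∀ p ∈ HP, v₂ p = 0)) ∧
    (∀ x, L0 D c ν₁ ν₂ μ₁ μ₂ u v₁ v₂ x + lam * u x ≤ 0) ∧
    (∀ x y : ℝ, 0 < y → Lf d₁ c₁ a₁ v₁ x y + lam * v₁ (x, y) ≤ 0) ∧
    (∀ x y : ℝ, 0 < y → Lf d₂ c₂ a₂ v₂ x y + lam * v₂ (x, y) ≤ 0) ∧
    (∀ x, Bf d₁ μ₁ ν₁ u v₁ x ≤ 0) ∧ (∀ x, Bf d₂ μ₂ ν₂ u v₂ x ≤ 0)}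

/-- The generalized principal eigenvalue `λ₁`. -/
def lam1 (D d₁ d₂ ν₁ ν₂ μ₁ μ₂ c c₁ c₂ : ℝ) (a₁ a₂ : ℝ × ℝ → ℝ) : ℝ :=
  sSup (glSet D d₁ d₂ ν₁ ν₂ μ₁ μ₂ c c₁ c₂ a₁ a₂)

section RoadFieldHelpers
open Topology

lemma cd2_deriv {f : ℝ → ℝ} (hf : ContDiff ℝ 2 f) : ContDiff ℝ 1 (deriv f) := by
  have h : ContDiff ℝ (1+1 : ℕ) f := by exact_mod_cast hf
  exact_mod_cast (contDiff_succ_iff_deriv.mp (by exact_mod_cast h)).2.2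

lemma cd2_diff {f : ℝ → ℝ} (hf : ContDiff ℝ 2 f) : Differentiable ℝ f :=
  hf.differentiable (by norm_num)

lemma cd2_deriv_diff {f : ℝ → ℝ} (hf : ContDiff ℝ 2 f) : Differentiable ℝ (deriv f) :=
  (cd2_deriv hf).differentiable (by norm_num)

lemma cd2_deriv2_cont {f : ℝ → ℝ} (hf : ContDiff ℝ 2 f) : Continuous (deriv (deriv f)) :=
  (contDiff_one_iff_deriv.mp (cd2_deriv hf)).2

lemma second_deriv_test {f : ℝ → ℝ} (hf : ContDiff ℝ 2 f) {x : ℝ}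
    (hmin : IsLocalMin f x) : 0 ≤ deriv (deriv f) x := by
  by_contra hneg
  push_neg at hneg
  have hgx : deriv f x = 0 := hmin.deriv_eq_zero
  -- deriv (deriv f) < 0 near x
  have hcont : Continuous (deriv (deriv f)) := cd2_deriv2_cont hf
  have hopen : IsOpen ((deriv (deriv f)) ⁻¹' Iio 0) := (isOpen_Iio).preimage hcont
  obtain ⟨δ, hδ, hball⟩ := Metric.isOpen_iff.mp hopen x hneg
  -- deriv f strictly decreasing on [x, x+δ/2]
  have hanti : StrictAntiOn (deriv f) (Icc x (x + δ/2)) := by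
    apply strictAntiOn_of_deriv_neg (convex_Icc _ _)
      ((cd2_deriv_diff hf).continuous.continuousOn)
    intro t ht
    rw [interior_Icc] at ht
    apply hball
    rw [Real.ball_eq_Ioo]
    constructor <;> [linarith [ht.1]; linarith [ht.2]]
  have hderiv_neg : ∀ t ∈ Ioo x (x + δ/2), deriv f t < 0 := by
    intro t ht
    have := hanti (left_mem_Icc.mpr (by linarith [ht.2, ht.1])) ⟨ht.1.le, ht.2.le⟩ ht.1
    rwa [hgx] at this
  have hanti2 : StrictAntiOn f (Icc x (x + δ/2)) := by
    apply strictAntiOn_of_deriv_neg (convex_Icc _ _) ((cd2_diff hf).continuous.continuousOn)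
    intro t ht; rw [interior_Icc] at ht; exact hderiv_neg t ht
  obtain ⟨r, hr, hrmin⟩ := Metric.mem_nhds_iff.mp hmin
  set t := x + min (δ/2) (r/2) with ht
  have hmin_pos : 0 < min (δ/2) (r/2) := lt_min (by linarith) (by linarith)
  have h1 : x < t := by simp only [ht]; linarith
  have hlt : f t < f x := hanti2 (left_mem_Icc.mpr (by linarith))
    ⟨le_of_lt h1, by have := min_le_left (δ/2) (r/2); simp only [ht]; linarith⟩ h1
  have hmem : t ∈ Metric.ball x r := by
    simp only [Metric.mem_ball, ht, Real.dist_eq]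
    have := min_le_right (δ/2) (r/2)
    rw [abs_of_pos (by linarith : (0:ℝ) < x + min (δ/2) (r/2) - x)]
    linarith
  exact absurd (hrmin hmem) (not_le.mpr hlt)

lemma deriv_nonneg_of_right {f : ℝ → ℝ} {f' δ : ℝ} (hf : HasDerivAt f f' 0)
    (h0 : f 0 = 0) (hδ : 0 < δ) (hpos : ∀ t, 0 < t → t ≤ δ → 0 ≤ f t) : 0 ≤ f' := by
  have h1 : Tendsto (slope f 0) (𝓝[(Ioi 0) \ {0}] 0) (𝓝 f') :=
    hasDerivWithinAt_iff_tendsto_slope.mp (hf.hasDerivWithinAt (s := Ioi 0))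
  have h2 : Ioi (0:ℝ) \ {0} = Ioi 0 := by simp
  rw [h2] at h1
  refine ge_of_tendsto h1 ?_
  filter_upwards [Ioc_mem_nhdsGT hδ] with t ht
  have : slope f 0 t = f t / t := by simp [slope, h0]; ring
  rw [this]
  exact div_nonneg (hpos t ht.1 ht.2) (le_of_lt ht.1)

lemma slice_x_cd {v : ℝ × ℝ → ℝ} (hv : ContDiff ℝ 2 v) (y : ℝ) :
    ContDiff ℝ 2 (fun t => v (t, y)) := hv.comp (contDiff_id.prodMk contDiff_const)

lemma slice_y_cd {v : ℝ × ℝ → ℝ} (hv : ContDiff ℝ 2 v) (x : ℝ) :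
    ContDiff ℝ 2 (fun t => v (x, t)) := hv.comp (contDiff_const.prodMk contDiff_id)

lemma pdy_zero_of_zero {v : ℝ × ℝ → ℝ} (hv : ContDiff ℝ 2 v)
    (h : ∀ p : ℝ × ℝ, 0 ≤ p.2 → v p = 0) (x : ℝ) :
    deriv (fun t => v (x, t)) 0 = 0 := by
  have hdiff : DifferentiableAt ℝ (fun t => v (x, t)) 0 := (cd2_diff (slice_y_cd hv x)) 0
  have h1 : HasDerivWithinAt (fun t => v (x, t)) (deriv (fun t => v (x, t)) 0) (Ici 0) 0 :=
    hdiff.hasDerivAt.hasDerivWithinAt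
  have h2 : HasDerivWithinAt (fun t => v (x, t)) 0 (Ici 0) 0 := by
    apply (hasDerivWithinAt_const (0:ℝ) (Ici (0:ℝ)) (0:ℝ)).congr
    · intro t ht; exact h (x, t) ht
    · exact h (x, 0) le_rfl
  exact (uniqueDiffOn_Ici 0 0 self_mem_Ici).eq_deriv _ h1 h2

lemma zero_on_closed_HP {v : ℝ × ℝ → ℝ} (hv : Continuous v)
    (h : ∀ q : ℝ × ℝ, 0 < q.2 → v q = 0) {p : ℝ × ℝ} (hp : 0 ≤ p.2) : v p = 0 := by
  rcases hp.lt_or_eq with h' | h'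
  · exact h p h'
  · have hc : Tendsto (fun t => v (p.1, t)) (𝓝[>] 0) (𝓝 (v (p.1, 0))) :=
      ((hv.comp (continuous_const.prodMk continuous_id)).continuousAt
        (x := (0:ℝ))).continuousWithinAt
  -- the above gives tendsto within
    have h2 : Tendsto (fun t => v (p.1, t)) (𝓝[>] (0:ℝ)) (𝓝 0) := by
      apply Tendsto.congr' _ tendsto_const_nhds
      filter_upwards [self_mem_nhdsWithin] with t ht
      exact (h (p.1, t) ht).symm
    have heq := tendsto_nhds_unique hc h2
    rw [show p = (p.1, 0) from Prod.ext rfl h'.symm]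
    exact heq

lemma isLocalMin_slice_x {w : ℝ × ℝ → ℝ} {q : ℝ × ℝ} (h : IsLocalMin w q) :
    IsLocalMin (fun t => w (t, q.2)) q.1 := by
  have ht : Tendsto (fun t : ℝ => (t, q.2)) (𝓝 q.1) (𝓝 q) := by
    have := (continuous_id.prodMk (continuous_const (y := q.2))).tendsto q.1
    simpa using this
  exact ht.eventually h

lemma isLocalMin_slice_y {w : ℝ × ℝ → ℝ} {q : ℝ × ℝ} (h : IsLocalMin w q) :
    IsLocalMin (fun t => w (q.1, t)) q.2 := by
  have ht : Tendsto (fun t : ℝ => (q.1, t)) (𝓝 q.2) (𝓝 q) := by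
    have := ((continuous_const (y := q.1)).prodMk continuous_id).tendsto q.2
    simpa using this
  exact ht.eventually h

lemma gauss_hasDerivAt (a b C E' x : ℝ) :
    HasDerivAt (fun t => Real.exp (a * (t - b) ^ 2 + C) - E')
      (Real.exp (a * (x - b) ^ 2 + C) * (2 * a * (x - b))) x := by
  have h1 : HasDerivAt (fun t : ℝ => a * (t - b) ^ 2 + C) (2 * a * (x - b)) x := by
    have := (((hasDerivAt_id x).sub_const b).pow 2).const_mul a
    exact (this.add_const C).congr_deriv (by simp [id]; ring)
  have := h1.exp
  convert this.sub_const E' using 1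

lemma gauss_deriv (a b C E' x : ℝ) :
    deriv (fun t => Real.exp (a * (t - b) ^ 2 + C) - E') x =
      Real.exp (a * (x - b) ^ 2 + C) * (2 * a * (x - b)) :=
  (gauss_hasDerivAt a b C E' x).deriv

lemma gauss_deriv2 (a b C E' x : ℝ) :
    deriv (deriv (fun t => Real.exp (a * (t - b) ^ 2 + C) - E')) x =
      Real.exp (a * (x - b) ^ 2 + C) * ((2 * a * (x - b)) ^ 2 + 2 * a) := by
  have hfe : deriv (fun t => Real.exp (a * (t - b) ^ 2 + C) - E') =
      fun t => Real.exp (a * (t - b) ^ 2 + C) * (2 * a * (t - b)) :=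
    funext fun t => gauss_deriv a b C E' t
  rw [hfe]
  have h1 : HasDerivAt (fun t : ℝ => a * (t - b) ^ 2 + C) (2 * a * (x - b)) x := by
    have := (((hasDerivAt_id x).sub_const b).pow 2).const_mul a
    exact (this.add_const C).congr_deriv (by simp [id]; ring)
  have h2 : HasDerivAt (fun t : ℝ => 2 * a * (t - b)) (2 * a) x := by
    have := ((hasDerivAt_id x).sub_const b).const_mul (2 * a)
    simpa using this
  have := (h1.exp.mul h2)
  rw [HasDerivAt.deriv (f := fun t => Real.exp (a * (t - b) ^ 2 + C) * (2 * a * (t - b))) this]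
  ring

lemma gauss_cd (a b C E' : ℝ) : ContDiff ℝ 2 (fun t => Real.exp (a * (t - b) ^ 2 + C) - E') := by
  apply ContDiff.sub _ contDiff_const
  apply Real.contDiff_exp.comp
  apply ContDiff.add _ contDiff_const
  exact contDiff_const.mul (((contDiff_id.sub contDiff_const)).pow 2)

lemma deriv_sub_smul {f g : ℝ → ℝ} (hf : ContDiff ℝ 2 f) (hg : ContDiff ℝ 2 g) (ε : ℝ) :
    deriv (fun t => f t - ε * g t) = fun t => deriv f t - ε * deriv g t := by
  funext t
  rw [deriv_fun_sub (cd2_diff hf t) ((cd2_diff hg t).const_mul ε), deriv_const_mul ε (cd2_diff hg t)]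

lemma deriv2_sub_smul {f g : ℝ → ℝ} (hf : ContDiff ℝ 2 f) (hg : ContDiff ℝ 2 g) (ε x : ℝ) :
    deriv (deriv (fun t => f t - ε * g t)) x = deriv (deriv f) x - ε * deriv (deriv g) x := by
  rw [deriv_sub_smul hf hg ε]
  rw [deriv_fun_sub (cd2_deriv_diff hf x) ((cd2_deriv_diff hg x).const_mul ε),
    deriv_const_mul ε (cd2_deriv_diff hg x)]

lemma gauss_flip (a b C E' : ℝ) : (fun t => Real.exp (C + a * (t - b) ^ 2) - E')
    = (fun t => Real.exp (a * (t - b) ^ 2 + C) - E') := by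
  funext t; rw [add_comm]

lemma gauss_deriv' (a b C E' x : ℝ) :
    deriv (fun t => Real.exp (C + a * (t - b) ^ 2) - E') x =
      Real.exp (a * (x - b) ^ 2 + C) * (2 * a * (x - b)) := by
  rw [gauss_flip, gauss_deriv]

lemma gauss_deriv2' (a b C E' x : ℝ) :
    deriv (deriv (fun t => Real.exp (C + a * (t - b) ^ 2) - E')) x =
      Real.exp (a * (x - b) ^ 2 + C) * ((2 * a * (x - b)) ^ 2 + 2 * a) := by
  rw [gauss_flip, gauss_deriv2]

lemma gauss_cd' (a b C E' : ℝ) :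
    ContDiff ℝ 2 (fun t => Real.exp (C + a * (t - b) ^ 2) - E') := by
  rw [gauss_flip]; exact gauss_cd a b C E'

lemma path_hasDerivAt (p n : ℝ × ℝ) : HasDerivAt (fun t : ℝ => p + t • n) n 0 := by
  have h1 : HasDerivAt (fun t : ℝ => t • n) ((1:ℝ) • n) 0 := (hasDerivAt_id 0).smul_const n
  simpa using h1.const_add p

def sqd (z q : ℝ × ℝ) : ℝ := (q.1 - z.1) ^ 2 + (q.2 - z.2) ^ 2

lemma sqd_cont (z : ℝ × ℝ) : Continuous (sqd z) := by
  unfold sqd; fun_prop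

lemma mem_sq_le {z q : ℝ × ℝ} {ρ : ℝ} (h : sqd z q ≤ ρ) (hρ : 0 < ρ) :
    |q.1 - z.1| ≤ Real.sqrt ρ ∧ |q.2 - z.2| ≤ Real.sqrt ρ := by
  unfold sqd at h
  constructor
  · rw [← Real.sqrt_sq_eq_abs]
    exact Real.sqrt_le_sqrt (by nlinarith [sq_nonneg (q.2 - z.2)])
  · rw [← Real.sqrt_sq_eq_abs]
    exact Real.sqrt_le_sqrt (by nlinarith [sq_nonneg (q.1 - z.1)])

set_option maxHeartbeats 1000000 in
lemma hopf_lemma {d γ M : ℝ} (hd : 0 < d) (hM : 0 < M) {v : ℝ × ℝ → ℝ} (hv : ContDiff ℝ 2 v)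
    (H : ∀ x y : ℝ, 0 < y → d * lap v x y + γ * pdx v x y ≤ M * v (x, y))
    (z p : ℝ × ℝ) (ρ : ℝ) (hρ : 0 < ρ)
    (hball : ∀ q : ℝ × ℝ, sqd z q < ρ → 0 < q.2)
    (hpos : ∀ q : ℝ × ℝ, sqd z q < ρ → 0 < v q)
    (hsph : ∀ q : ℝ × ℝ, sqd z q = ρ → 0 ≤ v q)
    (hp : sqd z p = ρ) (hvp : v p = 0) :
    0 < deriv (fun t : ℝ => v (p + t • (z - p))) 0 := by
  have hp' : (p.1 - z.1) ^ 2 + (p.2 - z.2) ^ 2 = ρ := hp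
  set s : ℝ := Real.sqrt ρ with hsdef
  have hs2 : s ^ 2 = ρ := Real.sq_sqrt hρ.le
  have hs0 : 0 < s := Real.sqrt_pos.mpr hρ
  set α : ℝ := max 1 ((4 * d + 2 * |γ| * s + M + 1) / (d * ρ)) with hαdef
  have hα1 : 1 ≤ α := le_max_left _ _
  have hα0 : 0 < α := lt_of_lt_of_le one_pos hα1
  have hαkey : 4 * d + 2 * |γ| * s + M + 1 ≤ d * ρ * α := by
    have h1 : (4 * d + 2 * |γ| * s + M + 1) / (d * ρ) ≤ α := le_max_right _ _
    have h2 : 0 < d * ρ := mul_pos hd hρ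
    calc 4 * d + 2 * |γ| * s + M + 1 = ((4 * d + 2 * |γ| * s + M + 1) / (d * ρ)) * (d * ρ) := by
          field_simp
      _ ≤ α * (d * ρ) := by
          apply mul_le_mul_of_nonneg_right h1 h2.le
      _ = d * ρ * α := by ring
  clear_value α
  set E : ℝ := Real.exp ((-α) * ρ) with hEdef
  have hE0 : 0 < E := Real.exp_pos _
  set h : ℝ × ℝ → ℝ :=
    fun q => Real.exp ((-α) * (q.1 - z.1) ^ 2 + (-α) * (q.2 - z.2) ^ 2) - E with hhdef
  -- derivative formulas for h
  have hpdx : ∀ x y : ℝ, pdx h x y =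
      Real.exp ((-α) * (x - z.1) ^ 2 + (-α) * (y - z.2) ^ 2) * (2 * (-α) * (x - z.1)) :=
    fun x y => gauss_deriv (-α) z.1 ((-α) * (y - z.2) ^ 2) E x
  have hlapx : ∀ x y : ℝ, deriv (fun t => pdx h t y) x =
      Real.exp ((-α) * (x - z.1) ^ 2 + (-α) * (y - z.2) ^ 2)
        * ((2 * (-α) * (x - z.1)) ^ 2 + 2 * (-α)) :=
    fun x y => gauss_deriv2 (-α) z.1 ((-α) * (y - z.2) ^ 2) E x
  have hpdy : ∀ x y : ℝ, pdy h x y =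
      Real.exp ((-α) * (x - z.1) ^ 2 + (-α) * (y - z.2) ^ 2) * (2 * (-α) * (y - z.2)) := by
    intro x y
    exact (gauss_deriv' (-α) z.2 ((-α) * (x - z.1) ^ 2) E y).trans (by rw [add_comm])
  have hlapy : ∀ x y : ℝ, deriv (fun t => pdy h x t) y =
      Real.exp ((-α) * (x - z.1) ^ 2 + (-α) * (y - z.2) ^ 2)
        * ((2 * (-α) * (y - z.2)) ^ 2 + 2 * (-α)) := by
    intro x y
    exact (gauss_deriv2' (-α) z.2 ((-α) * (x - z.1) ^ 2) E y).trans (by rw [add_comm])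
  have hlap : ∀ x y : ℝ, lap h x y =
      Real.exp ((-α) * (x - z.1) ^ 2 + (-α) * (y - z.2) ^ 2)
        * (4 * α ^ 2 * sqd z (x, y) - 4 * α) := by
    intro x y
    unfold lap
    rw [hlapx, hlapy]
    unfold sqd
    ring
  -- continuity of h
  have hhcont : Continuous h := by
    rw [hhdef]
    fun_prop
  -- barrier inequality on the annulus
  have hbar : ∀ q : ℝ × ℝ, ρ/4 < sqd z q → sqd z q < ρ →
      M * h q < d * lap h q.1 q.2 + γ * pdx h q.1 q.2 := by
    intro q h1 h2
    have habs := mem_sq_le h2.le hρ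
    set e : ℝ := Real.exp ((-α) * (q.1 - z.1) ^ 2 + (-α) * (q.2 - z.2) ^ 2) with hedef
    have he0 : 0 < e := Real.exp_pos _
    have hsq : sqd z q = (q.1 - z.1) ^ 2 + (q.2 - z.2) ^ 2 := rfl
    have hhq : h q = e - E := rfl
    have hEe : E ≤ e := by
      apply Real.exp_le_exp.mpr
      rw [hsq] at h2
      nlinarith
    have hlapq : lap h q.1 q.2 = e * (4 * α ^ 2 * sqd z q - 4 * α) := hlap q.1 q.2
    have hpdxq : pdx h q.1 q.2 = e * (2 * (-α) * (q.1 - z.1)) := hpdx q.1 q.2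
    rw [hlapq, hpdxq, hhq]
    -- bound the drift term
    have hdrift : γ * (e * (2 * (-α) * (q.1 - z.1))) ≥ -(2 * α * |γ| * s * e) := by
      have h3 : γ * (q.1 - z.1) ≤ |γ| * s := by
        calc γ * (q.1 - z.1) ≤ |γ * (q.1 - z.1)| := le_abs_self _
          _ = |γ| * |q.1 - z.1| := abs_mul _ _
          _ ≤ |γ| * s := by
              apply mul_le_mul_of_nonneg_left habs.1 (abs_nonneg _)
      nlinarith [mul_pos hα0 he0]
    -- main estimate
    have hfinal : d * ρ * α ^ 2 - 4 * d * α - 2 * |γ| * s * α - M ≥ α := by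
      have hk2 := mul_le_mul_of_nonneg_right hαkey hα0.le
      have hM' : M ≤ M * α := by nlinarith
      nlinarith [hk2, hM']
    set S : ℝ := sqd z q with hSdef
    have k1 : d * (e * (4 * α ^ 2 * S - 4 * α)) + γ * (e * (2 * (-α) * (q.1 - z.1)))
        ≥ d * e * 4 * α ^ 2 * S - 4 * d * α * e - 2 * α * |γ| * s * e := by
      have expand : d * (e * (4 * α ^ 2 * S - 4 * α)) = d * e * 4 * α ^ 2 * S - 4 * d * α * e := by
        ring
      linarith [hdrift]
    have k2 : d * e * 4 * α ^ 2 * S - d * e * α ^ 2 * ρ > 0 := by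
      have hfac : 0 < (d * e * α ^ 2) * (4 * S - ρ) := by
        apply mul_pos (by positivity)
        linarith [h1]
      nlinarith [hfac]
    have k3 : d * e * α ^ 2 * ρ - 4 * d * α * e - 2 * α * |γ| * s * e - M * e ≥ α * e := by
      have hfac := mul_nonneg (sub_nonneg.mpr hfinal) he0.le
      nlinarith [hfac]
    linarith [k1, k2, k3, mul_pos hα0 he0, mul_pos hM hE0]
  -- the closed annulus
  set K : Set (ℝ × ℝ) := {q | ρ/4 ≤ sqd z q ∧ sqd z q ≤ ρ} with hKdef
  have hKcompact : IsCompact K := by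
    apply Metric.isCompact_of_isClosed_isBounded
    · have : K = (sqd z) ⁻¹' (Icc (ρ/4) ρ) := rfl
      rw [this]
      exact IsClosed.preimage (sqd_cont z) isClosed_Icc
    · apply Bornology.IsBounded.subset (Metric.isBounded_closedBall (x := z) (r := s))
      intro q hq
      have habs := mem_sq_le hq.2 hρ
      simp only [Metric.mem_closedBall, Prod.dist_eq, Real.dist_eq]
      exact max_le habs.1 habs.2
  have hKne : K.Nonempty := ⟨p, by constructor <;> rw [hp] <;> linarith⟩
  -- minimum of v on the inner sphere
  set Sin : Set (ℝ × ℝ) := {q | sqd z q = ρ/4} with hSindef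
  have hSincompact : IsCompact Sin := by
    apply Metric.isCompact_of_isClosed_isBounded
    · have : Sin = (sqd z) ⁻¹' {ρ/4} := rfl
      rw [this]
      exact IsClosed.preimage (sqd_cont z) isClosed_singleton
    · apply Bornology.IsBounded.subset (Metric.isBounded_closedBall (x := z) (r := s))
      intro q hq
      have hq' : sqd z q ≤ ρ := by rw [hq]; linarith
      have habs := mem_sq_le hq' hρ
      simp only [Metric.mem_closedBall, Prod.dist_eq, Real.dist_eq]
      exact max_le habs.1 habs.2
  have hSinne : Sin.Nonempty := by
    refine ⟨(z.1 + s/2, z.2), ?_⟩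
    show (z.1 + s/2 - z.1) ^ 2 + (z.2 - z.2) ^ 2 = ρ/4
    have : (z.1 + s/2 - z.1) ^ 2 = s^2/4 := by ring
    rw [this, hs2]; ring
  obtain ⟨qm, hqmS, hqmmin⟩ := hSincompact.exists_isMinOn hSinne (hv.continuous.continuousOn)
  set m : ℝ := v qm with hmdef
  have hm0 : 0 < m := hpos qm (by rw [show sqd z qm = ρ/4 from hqmS]; linarith)
  set hmx : ℝ := Real.exp ((-α) * (ρ/4)) - E with hmxdef
  have hmx0 : 0 < hmx := by
    rw [hmxdef, hEdef, sub_pos]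
    apply Real.exp_lt_exp.mpr
    nlinarith
  set ε : ℝ := m / hmx with hεdef
  have hε0 : 0 < ε := div_pos hm0 hmx0
  have hεhmx : ε * hmx = m := div_mul_cancel₀ m (ne_of_gt hmx0)
  -- h equals hmx on the inner sphere and 0 on the outer sphere
  have hinner : ∀ q : ℝ × ℝ, sqd z q = ρ/4 → h q = hmx := by
    intro q hq
    show Real.exp ((-α) * (q.1 - z.1) ^ 2 + (-α) * (q.2 - z.2) ^ 2) - E = hmx
    rw [hmxdef]
    congr 2
    have hq' : (q.1 - z.1) ^ 2 + (q.2 - z.2) ^ 2 = ρ/4 := hq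
    linear_combination (-α) * hq'
  have houter : ∀ q : ℝ × ℝ, sqd z q = ρ → h q = 0 := by
    intro q hq
    show Real.exp ((-α) * (q.1 - z.1) ^ 2 + (-α) * (q.2 - z.2) ^ 2) - E = 0
    rw [hEdef, sub_eq_zero]
    congr 1
    have hq' : (q.1 - z.1) ^ 2 + (q.2 - z.2) ^ 2 = ρ := hq
    linear_combination (-α) * hq'
  -- w := v - ε h is nonnegative on the annulus
  set w : ℝ × ℝ → ℝ := fun q => v q - ε * h q with hwdef
  have hwcont : Continuous w := hv.continuous.sub (continuous_const.mul hhcont)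
  have hwK : ∀ q ∈ K, 0 ≤ w q := by
    obtain ⟨q₀, hq₀K, hq₀min⟩ := hKcompact.exists_isMinOn hKne hwcont.continuousOn
    intro q hq
    by_contra hneg
    push_neg at hneg
    have hq₀neg : w q₀ < 0 := lt_of_le_of_lt (hq₀min hq) hneg
    -- q₀ is not on the boundary spheres
    have houterK : sqd z q₀ ≠ ρ := by
      intro heq
      rw [hwdef] at hq₀neg
      simp only at hq₀neg
      rw [houter q₀ heq, mul_zero, sub_zero] at hq₀neg
      exact absurd (hsph q₀ heq) (not_le.mpr hq₀neg)
    have hinnerK : sqd z q₀ ≠ ρ/4 := by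
      intro heq
      rw [hwdef] at hq₀neg
      simp only at hq₀neg
      rw [hinner q₀ heq, hεhmx] at hq₀neg
      have := hqmmin (show q₀ ∈ Sin from heq)
      simp only [hmdef] at this
      have : m ≤ v q₀ := this
      linarith
    have hq₀1 : ρ/4 < sqd z q₀ := lt_of_le_of_ne hq₀K.1 (Ne.symm hinnerK)
    have hq₀2 : sqd z q₀ < ρ := lt_of_le_of_ne hq₀K.2 houterK
    -- q₀ is an interior local minimum of w
    have hA : IsOpen {q : ℝ × ℝ | ρ/4 < sqd z q ∧ sqd z q < ρ} := by
      have : {q : ℝ × ℝ | ρ/4 < sqd z q ∧ sqd z q < ρ} = (sqd z) ⁻¹' (Ioo (ρ/4) ρ) := rfl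
      rw [this]
      exact IsOpen.preimage (sqd_cont z) isOpen_Ioo
    have hlocmin : IsLocalMin w q₀ := by
      filter_upwards [hA.mem_nhds ⟨hq₀1, hq₀2⟩] with q hq'
      exact hq₀min (show q ∈ K from ⟨hq'.1.le, hq'.2.le⟩)
    -- slices of w are C²
    have hwx : ContDiff ℝ 2 (fun t => w (t, q₀.2)) :=
      (slice_x_cd hv q₀.2).sub (contDiff_const.mul
        (gauss_cd (-α) z.1 ((-α) * (q₀.2 - z.2) ^ 2) E))
    have hwy : ContDiff ℝ 2 (fun t => w (q₀.1, t)) :=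
      (slice_y_cd hv q₀.1).sub (contDiff_const.mul
        (gauss_cd' (-α) z.2 ((-α) * (q₀.1 - z.1) ^ 2) E))
    -- first and second order conditions
    have hB1 : pdx w q₀.1 q₀.2 = 0 := (isLocalMin_slice_x hlocmin).deriv_eq_zero
    have hB2 : 0 ≤ deriv (fun t => pdx w t q₀.2) q₀.1 :=
      second_deriv_test hwx (isLocalMin_slice_x hlocmin)
    have hB3 : 0 ≤ deriv (fun t => pdy w q₀.1 t) q₀.2 :=
      second_deriv_test hwy (isLocalMin_slice_y hlocmin)
    -- linearity of the operators
    have hlin1 : pdx w q₀.1 q₀.2 = pdx v q₀.1 q₀.2 - ε * pdx h q₀.1 q₀.2 :=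
      congrFun (deriv_sub_smul (slice_x_cd hv q₀.2)
        (gauss_cd (-α) z.1 ((-α) * (q₀.2 - z.2) ^ 2) E) ε) q₀.1
    have hlin2 : deriv (fun t => pdx w t q₀.2) q₀.1 =
        deriv (fun t => pdx v t q₀.2) q₀.1 - ε * deriv (fun t => pdx h t q₀.2) q₀.1 :=
      deriv2_sub_smul (slice_x_cd hv q₀.2)
        (gauss_cd (-α) z.1 ((-α) * (q₀.2 - z.2) ^ 2) E) ε q₀.1
    have hlin3 : deriv (fun t => pdy w q₀.1 t) q₀.2 =
        deriv (fun t => pdy v q₀.1 t) q₀.2 - ε * deriv (fun t => pdy h q₀.1 t) q₀.2 :=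
      deriv2_sub_smul (slice_y_cd hv q₀.1)
        (gauss_cd' (-α) z.2 ((-α) * (q₀.1 - z.1) ^ 2) E) ε q₀.2
    have hlapw : lap w q₀.1 q₀.2 = lap v q₀.1 q₀.2 - ε * lap h q₀.1 q₀.2 := by
      unfold lap
      rw [hlin2, hlin3]
      ring
    -- the contradiction
    have hy0 : 0 < q₀.2 := hball q₀ hq₀2
    have hHq := H q₀.1 q₀.2 hy0
    have hbarq := hbar q₀ hq₀1 hq₀2
    have hwq₀ : w q₀ = v q₀ - ε * h q₀ := rfl
    have hvq₀ : v (q₀.1, q₀.2) = v q₀ := by rw [Prod.mk.eta]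
    have hineq : 0 ≤ d * lap w q₀.1 q₀.2 + γ * pdx w q₀.1 q₀.2 := by
      rw [hB1, mul_zero, add_zero]
      unfold lap
      nlinarith [hB2, hB3, hd]
    rw [hlapw, hlin1] at hineq
    nlinarith [hε0, hM, hq₀neg]
  -- the path and its derivative
  have hsqpath : ∀ t : ℝ, sqd z (p + t • (z - p)) = (1 - t)^2 * ρ := by
    intro t
    show (p.1 + t * (z.1 - p.1) - z.1)^2 + (p.2 + t * (z.2 - p.2) - z.2)^2 = (1-t)^2*ρ
    linear_combination (1-t)^2 * hp'
  have hφcomp : ∀ t : ℝ, h (p + t • (z - p)) = Real.exp ((-α) * ((1 - t)^2 * ρ)) - E := by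
    intro t
    show Real.exp ((-α) * (p.1 + t * (z.1 - p.1) - z.1) ^ 2
      + (-α) * (p.2 + t * (z.2 - p.2) - z.2) ^ 2) - E = _
    congr 2
    linear_combination (-α) * (1-t)^2 * hp'
  have hφder : HasDerivAt (fun t : ℝ => Real.exp ((-α) * ((1 - t)^2 * ρ)) - E)
      (2 * α * ρ * E) 0 := by
    have h2 : HasDerivAt (fun t : ℝ => (1 - t)) (-1 : ℝ) 0 := by
      simpa using (hasDerivAt_id (0:ℝ)).const_sub 1
    have h1 : HasDerivAt (fun t : ℝ => (-α) * ((1 - t)^2 * ρ)) (2 * α * ρ) 0 := by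
      have h3 := ((h2.pow 2).mul_const ρ).const_mul (-α)
      exact h3.congr_deriv (by push_cast; ring)
    have h4 := h1.exp
    have h5 : Real.exp ((-α) * ((1 - (0:ℝ))^2 * ρ)) = E := by rw [hEdef]; norm_num
    rw [h5] at h4
    exact (h4.sub_const E).congr_deriv (by ring)
  have hpath := path_hasDerivAt p (z - p)
  have h0pt : p + (0:ℝ) • (z - p) = p := by simp
  have hvdiff : HasFDerivAt v (fderiv ℝ v p) (p + (0:ℝ) • (z - p)) := by
    rw [h0pt]
    exact (hv.differentiable (by norm_num) p).hasFDerivAt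
  have hg : HasDerivAt (fun t : ℝ => v (p + t • (z - p))) (fderiv ℝ v p (z - p)) 0 :=
    hvdiff.comp_hasDerivAt 0 hpath
  set ψ : ℝ → ℝ :=
    fun t => v (p + t • (z - p)) - ε * (Real.exp ((-α) * ((1 - t)^2 * ρ)) - E) with hψdef
  have hψder : HasDerivAt ψ (fderiv ℝ v p (z - p) - ε * (2 * α * ρ * E)) 0 :=
    hg.sub (hφder.const_mul ε)
  have hψ0 : ψ 0 = 0 := by
    rw [hψdef]
    simp only
    have h5 : Real.exp ((-α) * ((1 - (0:ℝ))^2 * ρ)) = E := by rw [hEdef]; norm_num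
    rw [h5, h0pt, hvp]
    ring
  have hψnn : ∀ t, 0 < t → t ≤ 1/2 → 0 ≤ ψ t := by
    intro t ht1 ht2
    have e1 : (1:ℝ)/2 ≤ 1 - t := by linarith
    have e2 : 1 - t ≤ 1 := by linarith
    have hsq1 : (1:ℝ)/2 * (1/2) ≤ (1 - t) * (1 - t) :=
      mul_le_mul e1 e1 (by norm_num) (by linarith)
    have hsq2 : (1 - t) * (1 - t) ≤ 1 * 1 :=
      mul_le_mul e2 e2 (by linarith) (by norm_num)
    have hA : (1 - t)^2 ≤ 1 := by rw [pow_two]; linarith [hsq2]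
    have hB : (1:ℝ)/4 ≤ (1 - t)^2 := by rw [pow_two]; linarith [hsq1]
    have hA' := mul_le_mul_of_nonneg_right hA hρ.le
    have hB' := mul_le_mul_of_nonneg_right hB hρ.le
    have hqt : (p + t • (z - p)) ∈ K := by
      constructor
      · rw [hsqpath]
        linarith [hB']
      · rw [hsqpath]
        linarith [hA']
    have hKK : 0 ≤ v (p + t • (z - p)) - ε * h (p + t • (z - p)) := hwK _ hqt
    rw [hφcomp t] at hKK
    exact hKK
  have hder0 := deriv_nonneg_of_right hψder hψ0 (by norm_num : (0:ℝ) < 1/2) hψnn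
  have hDpos : 0 < fderiv ℝ v p (z - p) := by
    have : 0 < ε * (2 * α * ρ * E) := by positivity
    linarith
  rw [hg.deriv]
  exact hDpos
lemma sqd_comm (a b : ℝ × ℝ) : sqd a b = sqd b a := by unfold sqd; ring

lemma sqd_y_bound {z q : ℝ × ℝ} : (q.2 - z.2)^2 ≤ sqd z q := by
  unfold sqd; nlinarith [sq_nonneg (q.1 - z.1)]

lemma abs_lt_of_sq_lt {a b : ℝ} (hb : 0 < b) (h : a^2 < b^2) : |a| < b := by
  by_contra hc
  push_neg at hc
  have := sq_abs a
  nlinarith [abs_nonneg a]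

lemma eq_of_sqd_eq_zero {z q : ℝ × ℝ} (h : sqd z q = 0) : q = z := by
  have h1 : (q.1 - z.1)^2 + (q.2 - z.2)^2 = 0 := h
  have h2 : q.1 = z.1 := by nlinarith [sq_nonneg (q.1 - z.1), sq_nonneg (q.2 - z.2)]
  have h3 : q.2 = z.2 := by nlinarith [sq_nonneg (q.1 - z.1), sq_nonneg (q.2 - z.2)]
  exact Prod.ext h2 h3

set_option maxHeartbeats 1000000 in
lemma smp_zero {d γ M : ℝ} (hd : 0 < d) (hM : 0 < M) {v : ℝ × ℝ → ℝ} (hv : ContDiff ℝ 2 v)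
    (hnn : ∀ q : ℝ × ℝ, 0 < q.2 → 0 ≤ v q)
    (H : ∀ x y : ℝ, 0 < y → d * lap v x y + γ * pdx v x y ≤ M * v (x, y))
    {p₀ : ℝ × ℝ} (hp₀ : 0 < p₀.2) (hz : v p₀ = 0) :
    ∀ q : ℝ × ℝ, 0 < q.2 → v q = 0 := by
  by_contra hcon
  push_neg at hcon
  obtain ⟨q₀, hq₀2, hq₀⟩ := hcon
  have hq₀pos : 0 < v q₀ := lt_of_le_of_ne (hnn q₀ hq₀2) (Ne.symm hq₀)
  -- the segment from q₀ to p₀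
  set F : ℝ → ℝ × ℝ := fun t => q₀ + t • (p₀ - q₀) with hFdef
  have hFcont : Continuous F := by fun_prop
  set ymin : ℝ := min q₀.2 p₀.2 with hymindef
  have hymin : 0 < ymin := lt_min hq₀2 hp₀
  have hFy : ∀ t : ℝ, 0 ≤ t → t ≤ 1 → ymin ≤ (F t).2 := by
    intro t h0 h1
    have : (F t).2 = (1 - t) * q₀.2 + t * p₀.2 := by
      show q₀.2 + t * (p₀.2 - q₀.2) = _
      ring
    rw [this]
    have l1 : ymin ≤ q₀.2 := min_le_left _ _
    have l2 : ymin ≤ p₀.2 := min_le_right _ _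
    nlinarith
  -- the first zero along the segment
  set S : Set ℝ := {t | t ∈ Icc (0:ℝ) 1 ∧ v (F t) = 0} with hSdef
  have hSclosed : IsClosed S := by
    have : S = Icc (0:ℝ) 1 ∩ (fun t => v (F t)) ⁻¹' {0} := rfl
    rw [this]
    exact isClosed_Icc.inter (IsClosed.preimage (hv.continuous.comp hFcont) isClosed_singleton)
  have hSne : S.Nonempty := by
    refine ⟨1, ⟨⟨zero_le_one, le_refl 1⟩, ?_⟩⟩
    have : F 1 = p₀ := by
      rw [hFdef]; simp
    rw [this]; exact hz
  have hSbdd : BddBelow S := ⟨0, fun t ht => ht.1.1⟩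
  set T : ℝ := sInf S with hTdef
  have hTS : T ∈ S := hSclosed.csInf_mem hSne hSbdd
  have hT0 : 0 < T := by
    rcases lt_or_eq_of_le (hTS.1.1) with h | h
    · exact h
    · exfalso
      have hFT : F T = q₀ := by rw [hFdef, ← h]; simp
      have h2 : v (F T) = 0 := hTS.2
      rw [hFT] at h2
      exact hq₀ h2
  have hT1 : T ≤ 1 := hTS.1.2
  have hpre : ∀ t, 0 ≤ t → t < T → 0 < v (F t) := by
    intro t h0 hlt
    have hnotS : t ∉ S := fun hts => absurd (csInf_le hSbdd hts) (not_le.mpr hlt)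
    have ht1 : t ≤ 1 := le_trans hlt.le hT1
    have hy : 0 < (F t).2 := lt_of_lt_of_le hymin (hFy t h0 ht1)
    rcases (hnn (F t) hy).lt_or_eq with h | h
    · exact h
    · exact absurd ⟨⟨h0, ht1⟩, h.symm⟩ hnotS
  set pstar : ℝ × ℝ := F T with hpstardef
  have hpstar0 : v pstar = 0 := hTS.2
  have hpstary : ymin ≤ pstar.2 := hFy T hT0.le hT1
  -- choose a point s close to pstar on the segment
  set N : ℝ := (p₀.1 - q₀.1)^2 + (p₀.2 - q₀.2)^2 with hNdef
  have hN0 : 0 ≤ N := by positivity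
  set δ : ℝ := ymin / (4 * (Real.sqrt N + 1)) with hδdef
  have hsqrtN : 0 ≤ Real.sqrt N := Real.sqrt_nonneg N
  have hδ0 : 0 < δ := by
    apply div_pos hymin
    positivity
  set t₁ : ℝ := max 0 (T - δ) with ht₁def
  have ht₁0 : 0 ≤ t₁ := le_max_left _ _
  have ht₁T : t₁ < T := max_lt hT0 (by linarith)
  have ht₁δ : T - t₁ ≤ δ := by
    rcases le_total 0 (T - δ) with h | h
    · rw [ht₁def, max_eq_right h]; linarith
    · rw [ht₁def, max_eq_left h]; linarith
  set s : ℝ × ℝ := F t₁ with hsdef2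
  have hvs : 0 < v s := hpre t₁ ht₁0 ht₁T
  have hsy : ymin ≤ s.2 := hFy t₁ ht₁0 (le_trans ht₁T.le hT1)
  have hs2 : 0 < s.2 := lt_of_lt_of_le hymin hsy
  have hsqsp : sqd s pstar = (T - t₁)^2 * N := by
    show (((F T).1 - (F t₁).1))^2 + (((F T).2 - (F t₁).2))^2 = _
    have e1 : (F T).1 - (F t₁).1 = (T - t₁) * (p₀.1 - q₀.1) := by
      show q₀.1 + T * (p₀.1 - q₀.1) - (q₀.1 + t₁ * (p₀.1 - q₀.1)) = _
      ring
    have e2 : (F T).2 - (F t₁).2 = (T - t₁) * (p₀.2 - q₀.2) := by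
      show q₀.2 + T * (p₀.2 - q₀.2) - (q₀.2 + t₁ * (p₀.2 - q₀.2)) = _
      ring
    rw [e1, e2, hNdef]
    ring
  have hkey : sqd s pstar < s.2^2 / 16 := by
    rw [hsqsp]
    have h1 : (T - t₁)^2 * N ≤ δ^2 * N := by
      apply mul_le_mul_of_nonneg_right _ hN0
      have := ht₁δ
      nlinarith [ht₁T]
    have h2 : δ^2 * N < ymin^2 / 16 := by
      rw [hδdef]
      rw [div_pow]
      have hNsq : N = Real.sqrt N * Real.sqrt N := (Real.mul_self_sqrt hN0).symm
      have hden : (0:ℝ) < (4 * (Real.sqrt N + 1))^2 := by positivity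
      rw [div_mul_eq_mul_div, div_lt_div_iff₀ hden (by norm_num : (0:ℝ) < 16)]
      nlinarith [hymin, hsqrtN]
    have h3 : ymin^2 ≤ s.2^2 := by nlinarith
    calc (T - t₁)^2 * N ≤ δ^2 * N := h1
      _ < ymin^2/16 := h2
      _ ≤ s.2^2/16 := by linarith
  clear_value T
  -- the set of nearby zeros
  set C : Set (ℝ × ℝ) := {q | sqd s q ≤ sqd s pstar ∧ v q = 0 ∧ s.2/2 ≤ q.2} with hCdef
  have hyfromsqd : ∀ q : ℝ × ℝ, sqd s q ≤ sqd s pstar → (3/4) * s.2 < q.2 := by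
    intro q hq
    have h1 : (q.2 - s.2)^2 ≤ sqd s q := sqd_y_bound
    have h2 : (q.2 - s.2)^2 < (s.2/4)^2 := by
      have : s.2^2/16 = (s.2/4)^2 := by ring
      linarith [hkey, this ▸ hkey]
    have := abs_lt_of_sq_lt (by linarith : (0:ℝ) < s.2/4) h2
    have := abs_lt.mp this
    linarith [this.1]
  have hCcompact : IsCompact C := by
    apply Metric.isCompact_of_isClosed_isBounded
    · have : C = (sqd s) ⁻¹' (Iic (sqd s pstar)) ∩ (v ⁻¹' {0} ∩ (fun q : ℝ × ℝ => q.2) ⁻¹' (Ici (s.2/2))) := by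
        ext q
        simp [hCdef, and_assoc]
      rw [this]
      exact (IsClosed.preimage (sqd_cont s) isClosed_Iic).inter
        ((IsClosed.preimage hv.continuous isClosed_singleton).inter
          (IsClosed.preimage continuous_snd isClosed_Ici))
    · apply Bornology.IsBounded.subset
        (Metric.isBounded_closedBall (x := s) (r := Real.sqrt (sqd s pstar)))
      intro q hq
      have h0 : 0 ≤ sqd s pstar := by
        have := hq.1
        have : (0:ℝ) ≤ sqd s q := by unfold sqd; positivity
        linarith [hq.1]
      have habs := mem_sq_le (ρ := sqd s pstar) hq.1
      by_cases hzero : 0 < sqd s pstar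
      · have habs := habs hzero
        simp only [Metric.mem_closedBall, Prod.dist_eq, Real.dist_eq]
        exact max_le habs.1 habs.2
      · have hz0 : sqd s pstar = 0 := le_antisymm (not_lt.mp hzero) h0
        have hq0 : sqd s q = 0 := le_antisymm (hz0 ▸ hq.1) (by unfold sqd; positivity)
        have : q = s := eq_of_sqd_eq_zero hq0
        simp [this]
  have hCne : C.Nonempty := by
    refine ⟨pstar, le_refl _, hpstar0, ?_⟩
    have := hyfromsqd pstar (le_refl _)
    linarith
  obtain ⟨zstar, hzstarC, hzstarmin⟩ := hCcompact.exists_isMinOn hCne (sqd_cont s).continuousOn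
  set r : ℝ := sqd s zstar with hrdef
  have hr_le : r ≤ sqd s pstar := hzstarC.1
  have hr0 : 0 < r := by
    rcases (show (0:ℝ) ≤ r by rw [hrdef]; unfold sqd; positivity).lt_or_eq with h | h
    · exact h
    · exfalso
      have hq0 : sqd s zstar = 0 := h.symm
      have heq : zstar = s := eq_of_sqd_eq_zero hq0
      have hvz : v zstar = 0 := hzstarC.2.1
      rw [heq] at hvz
      exact absurd hvz (ne_of_gt hvs)
  -- apply the Hopf lemma on the ball around s of radius √r
  have hballpos : ∀ q : ℝ × ℝ, sqd s q < r → 0 < q.2 := by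
    intro q hq
    have := hyfromsqd q (le_trans hq.le hr_le)
    linarith
  have hballv : ∀ q : ℝ × ℝ, sqd s q < r → 0 < v q := by
    intro q hq
    rcases (hnn q (hballpos q hq)).lt_or_eq with h | h
    · exact h
    · exfalso
      have hqC : q ∈ C := by
        refine ⟨le_trans hq.le hr_le, h.symm, ?_⟩
        have := hyfromsqd q (le_trans hq.le hr_le)
        linarith
      exact absurd (hzstarmin hqC) (not_le.mpr hq)
  have hsphv : ∀ q : ℝ × ℝ, sqd s q = r → 0 ≤ v q := by
    intro q hq
    apply hnn
    have := hyfromsqd q (hq ▸ hr_le)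
    linarith
  have hzstar0 : v zstar = 0 := hzstarC.2.1
  have hhopf := hopf_lemma hd hM hv H s zstar r hr0 hballpos hballv hsphv rfl hzstar0
  -- but zstar is an interior minimum of v
  have hzy : 0 < zstar.2 := by
    have := hzstarC.2.2
    linarith
  have hloc : ∀ᶠ q in nhds zstar, v zstar ≤ v q := by
    have hopen : IsOpen {q : ℝ × ℝ | 0 < q.2} := by
      have : {q : ℝ × ℝ | 0 < q.2} = (fun q : ℝ × ℝ => q.2) ⁻¹' (Ioi 0) := rfl
      rw [this]
      exact IsOpen.preimage continuous_snd isOpen_Ioi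
    filter_upwards [hopen.mem_nhds hzy] with q hq
    rw [hzstar0]
    exact hnn q hq
  have hpathcont : Continuous (fun t : ℝ => zstar + t • (s - zstar)) := by fun_prop
  have hpath0 : (fun t : ℝ => zstar + t • (s - zstar)) 0 = zstar := by simp
  have hlocmin : IsLocalMin (fun t : ℝ => v (zstar + t • (s - zstar))) 0 := by
    have htd : Filter.Tendsto (fun t : ℝ => zstar + t • (s - zstar)) (nhds 0) (nhds zstar) :=
      hpathcont.tendsto' 0 zstar (by simp)
    have := htd.eventually hloc
    filter_upwards [this] with t ht
    simpa [hpath0, hzstar0] using ht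
  have := hlocmin.deriv_eq_zero
  rw [this] at hhopf
  exact lt_irrefl 0 hhopf

set_option maxHeartbeats 1000000 in
lemma hopf_boundary {d γ M : ℝ} (hd : 0 < d) (hM : 0 < M) {v : ℝ × ℝ → ℝ} (hv : ContDiff ℝ 2 v)
    (hnn : ∀ q : ℝ × ℝ, 0 ≤ q.2 → 0 ≤ v q)
    (H : ∀ x y : ℝ, 0 < y → d * lap v x y + γ * pdx v x y ≤ M * v (x, y))
    (hpos : ∀ q : ℝ × ℝ, 0 < q.2 → 0 < v q)
    (x₀ : ℝ) (h0 : v (x₀, 0) = 0) :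
    0 < pdy v x₀ 0 := by
  have hyb : ∀ q : ℝ × ℝ, sqd (x₀, 1) q ≤ 1 → 0 ≤ q.2 ∧ (sqd (x₀, 1) q < 1 → 0 < q.2) := by
    intro q hq
    have h1 : (q.2 - 1)^2 ≤ sqd (x₀, 1) q := by
      have := sqd_y_bound (z := (x₀, 1)) (q := q)
      simpa using this
    constructor
    · nlinarith
    · intro hlt
      nlinarith
  have hball : ∀ q : ℝ × ℝ, sqd (x₀, 1) q < 1 → 0 < q.2 :=
    fun q hq => (hyb q hq.le).2 hq
  have hballv : ∀ q : ℝ × ℝ, sqd (x₀, 1) q < 1 → 0 < v q :=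
    fun q hq => hpos q (hball q hq)
  have hsphv : ∀ q : ℝ × ℝ, sqd (x₀, 1) q = 1 → 0 ≤ v q :=
    fun q hq => hnn q (hyb q hq.le).1
  have hp : sqd (x₀, 1) ((x₀, 0) : ℝ × ℝ) = 1 := by
    show (x₀ - x₀)^2 + ((0:ℝ) - 1)^2 = 1
    ring
  have hhopf := hopf_lemma hd hM hv H (x₀, 1) (x₀, 0) 1 one_pos hball hballv hsphv hp h0
  have heq : (fun t : ℝ => v ((x₀, 0) + t • (((x₀, 1) : ℝ × ℝ) - (x₀, 0)))) =
      fun t : ℝ => v (x₀, t) := by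
    funext t
    congr 1
    apply Prod.ext
    · show x₀ + t * (x₀ - x₀) = x₀
      ring
    · show 0 + t * (1 - 0) = t
      ring
  rw [heq] at hhopf
  exact hhopf

end RoadFieldHelpers

set_option maxHeartbeats 1000000 in
/-- **Strong maximum principle for the road-field system.** -/
theorem strong_maximum_principle_road_field
    (D d₁ d₂ ν₁ ν₂ μ₁ μ₂ : ℝ) (hD : 0 < D) (hd₁ : 0 < d₁) (hd₂ : 0 < d₂)
    (hν₁ : 0 < ν₁) (hν₂ : 0 < ν₂) (hμ₁ : 0 < μ₁) (hμ₂ : 0 < μ₂)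
    (c c₁ c₂ : ℝ) (a₁ a₂ : ℝ × ℝ → ℝ)
    (ha₁b : BddHP a₁) (ha₂b : BddHP a₂) (ha₁l : LocLipHP a₁) (ha₂l : LocLipHP a₂)
    (lam : ℝ) (u : ℝ → ℝ) (v₁ v₂ : ℝ × ℝ → ℝ)
    (hu : ContDiff ℝ 2 u) (hv₁ : ContDiff ℝ 2 v₁) (hv₂ : ContDiff ℝ 2 v₂)
    (hupos : ∀ x, 0 ≤ u x) (hv₁pos : ∀ p ∈ HP, 0 ≤ v₁ p) (hv₂pos : ∀ p ∈ HP, 0 ≤ v₂ p)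
    (hL0 : ∀ x, L0 D c ν₁ ν₂ μ₁ μ₂ u v₁ v₂ x + lam * u x ≤ 0)
    (hL1 : ∀ x y : ℝ, 0 < y → Lf d₁ c₁ a₁ v₁ x y + lam * v₁ (x, y) ≤ 0)
    (hL2 : ∀ x y : ℝ, 0 < y → Lf d₂ c₂ a₂ v₂ x y + lam * v₂ (x, y) ≤ 0)
    (hB1 : ∀ x, Bf d₁ μ₁ ν₁ u v₁ x ≤ 0)
    (hB2 : ∀ x, Bf d₂ μ₂ ν₂ u v₂ x ≤ 0) :
    ((∀ x, u x = 0) ∧ (∀ p ∈ HP, v₁ p = 0) ∧ (∀ p ∈ HP, v₂ p = 0)) ∨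
    ((∀ x, 0 < u x) ∧ (∀ p ∈ HP, 0 < v₁ p) ∧ (∀ p ∈ HP, 0 < v₂ p)) := by
  obtain ⟨Ma1, hMa1⟩ := ha₁b
  obtain ⟨Ma2, hMa2⟩ := ha₂b
  set M₁ : ℝ := |Ma1| + |lam| + 1 with hM₁def
  set M₂ : ℝ := |Ma2| + |lam| + 1 with hM₂def
  have hM₁0 : 0 < M₁ := by positivity
  have hM₂0 : 0 < M₂ := by positivity
  have H₁ : ∀ x y : ℝ, 0 < y → d₁ * lap v₁ x y + c₁ * pdx v₁ x y ≤ M₁ * v₁ (x, y) := by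
    intro x y hy
    have hL := hL1 x y hy
    unfold Lf at hL
    have hvnn : 0 ≤ v₁ (x, y) := hv₁pos (x, y) (le_of_lt hy)
    have ha := abs_le.mp (hMa1 (x, y) (le_of_lt hy))
    have h1 : 0 ≤ (M₁ + a₁ (x, y) + lam) * v₁ (x, y) := by
      apply mul_nonneg _ hvnn
      have := neg_abs_le lam
      have := le_abs_self Ma1
      rw [hM₁def]
      linarith [ha.1]
    nlinarith [h1]
  have H₂ : ∀ x y : ℝ, 0 < y → d₂ * lap v₂ x y + c₂ * pdx v₂ x y ≤ M₂ * v₂ (x, y) := by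
    intro x y hy
    have hL := hL2 x y hy
    unfold Lf at hL
    have hvnn : 0 ≤ v₂ (x, y) := hv₂pos (x, y) (le_of_lt hy)
    have ha := abs_le.mp (hMa2 (x, y) (le_of_lt hy))
    have h1 : 0 ≤ (M₂ + a₂ (x, y) + lam) * v₂ (x, y) := by
      apply mul_nonneg _ hvnn
      have := neg_abs_le lam
      have := le_abs_self Ma2
      rw [hM₂def]
      linarith [ha.1]
    nlinarith [h1]
  clear_value M₁ M₂
  -- dichotomies from the strong maximum principle
  have dich₁ : (∀ q : ℝ × ℝ, 0 < q.2 → v₁ q = 0) ∨ (∀ q : ℝ × ℝ, 0 < q.2 → 0 < v₁ q) := by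
    by_cases hex : ∃ p : ℝ × ℝ, 0 < p.2 ∧ v₁ p = 0
    · obtain ⟨p, hp1, hp2⟩ := hex
      exact Or.inl (smp_zero hd₁ hM₁0 hv₁ (fun q hq => hv₁pos q hq.le) H₁ hp1 hp2)
    · push_neg at hex
      exact Or.inr fun q hq => lt_of_le_of_ne (hv₁pos q hq.le) (Ne.symm (hex q hq))
  have dich₂ : (∀ q : ℝ × ℝ, 0 < q.2 → v₂ q = 0) ∨ (∀ q : ℝ × ℝ, 0 < q.2 → 0 < v₂ q) := by
    by_cases hex : ∃ p : ℝ × ℝ, 0 < p.2 ∧ v₂ p = 0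
    · obtain ⟨p, hp1, hp2⟩ := hex
      exact Or.inl (smp_zero hd₂ hM₂0 hv₂ (fun q hq => hv₂pos q hq.le) H₂ hp1 hp2)
    · push_neg at hex
      exact Or.inr fun q hq => lt_of_le_of_ne (hv₂pos q hq.le) (Ne.symm (hex q hq))
  -- a boundary zero of a positive field component is impossible
  have bdry₁ : ∀ x : ℝ, v₁ (x, 0) = 0 → (∀ q : ℝ × ℝ, 0 < q.2 → 0 < v₁ q) → False := by
    intro x hx hposq
    have hb := hopf_boundary hd₁ hM₁0 hv₁ (fun q hq => hv₁pos q hq) H₁ hposq x hx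
    have hB := hB1 x
    unfold Bf at hB
    rw [hx] at hB
    nlinarith [mul_pos hd₁ hb, mul_nonneg hμ₁.le (hupos x)]
  have bdry₂ : ∀ x : ℝ, v₂ (x, 0) = 0 → (∀ q : ℝ × ℝ, 0 < q.2 → 0 < v₂ q) → False := by
    intro x hx hposq
    have hb := hopf_boundary hd₂ hM₂0 hv₂ (fun q hq => hv₂pos q hq) H₂ hposq x hx
    have hB := hB2 x
    unfold Bf at hB
    rw [hx] at hB
    nlinarith [mul_pos hd₂ hb, mul_nonneg hμ₂.le (hupos x)]
  rcases dich₁ with h1z | h1p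
  · -- v₁ vanishes identically
    have h1HP : ∀ p ∈ HP, v₁ p = 0 := fun p hp => zero_on_closed_HP hv₁.continuous h1z hp
    have hpdy1 : ∀ x : ℝ, pdy v₁ x 0 = 0 := fun x =>
      pdy_zero_of_zero hv₁ (fun p hp => h1HP p hp) x
    have hu0 : ∀ x, u x = 0 := by
      intro x
      have hB := hB1 x
      unfold Bf at hB
      rw [hpdy1 x, h1HP (x, 0) (le_refl (0:ℝ))] at hB
      have h2 : μ₁ * u x ≤ 0 := by linarith
      have h3 : 0 ≤ μ₁ * u x := mul_nonneg hμ₁.le (hupos x)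
      have h4 : μ₁ * u x = 0 := le_antisymm h2 h3
      exact (mul_eq_zero.mp h4).resolve_left (ne_of_gt hμ₁)
    have huf : u = fun _ => 0 := funext hu0
    have hv2b : ∀ x, v₂ (x, 0) = 0 := by
      intro x
      have hL := hL0 x
      unfold L0 at hL
      rw [huf] at hL
      simp only [deriv_const', mul_zero, add_zero, zero_add, sub_zero, mul_zero] at hL
      rw [h1HP (x, 0) (le_refl (0:ℝ))] at hL
      have h2 : ν₂ * v₂ (x, 0) ≤ 0 := by linarith
      have h3 : 0 ≤ ν₂ * v₂ (x, 0) := mul_nonneg hν₂.le (hv₂pos (x, 0) (le_refl (0:ℝ)))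
      have h4 : ν₂ * v₂ (x, 0) = 0 := le_antisymm h2 h3
      exact (mul_eq_zero.mp h4).resolve_left (ne_of_gt hν₂)
    rcases dich₂ with h2z | h2p
    · exact Or.inl ⟨hu0, h1HP, fun p hp => zero_on_closed_HP hv₂.continuous h2z hp⟩
    · exact (bdry₂ 0 (hv2b 0) h2p).elim
  rcases dich₂ with h2z | h2p
  · -- v₂ vanishes identically but v₁ is positive: contradiction
    exfalso
    have h2HP : ∀ p ∈ HP, v₂ p = 0 := fun p hp => zero_on_closed_HP hv₂.continuous h2z hp
    have hpdy2 : ∀ x : ℝ, pdy v₂ x 0 = 0 := fun x =>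
      pdy_zero_of_zero hv₂ (fun p hp => h2HP p hp) x
    have hu0 : ∀ x, u x = 0 := by
      intro x
      have hB := hB2 x
      unfold Bf at hB
      rw [hpdy2 x, h2HP (x, 0) (le_refl (0:ℝ))] at hB
      have h2 : μ₂ * u x ≤ 0 := by linarith
      have h3 : 0 ≤ μ₂ * u x := mul_nonneg hμ₂.le (hupos x)
      have h4 : μ₂ * u x = 0 := le_antisymm h2 h3
      exact (mul_eq_zero.mp h4).resolve_left (ne_of_gt hμ₂)
    have huf : u = fun _ => 0 := funext hu0
    have hv1b : v₁ (0, 0) = 0 := by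
      have hL := hL0 0
      unfold L0 at hL
      rw [huf] at hL
      simp only [deriv_const', mul_zero, add_zero, zero_add, sub_zero, mul_zero] at hL
      rw [h2HP (0, 0) (le_refl (0:ℝ))] at hL
      have h2 : ν₁ * v₁ (0, 0) ≤ 0 := by linarith
      have h3 : 0 ≤ ν₁ * v₁ (0, 0) := mul_nonneg hν₁.le (hv₁pos (0, 0) (le_refl (0:ℝ)))
      have h4 : ν₁ * v₁ (0, 0) = 0 := le_antisymm h2 h3
      exact (mul_eq_zero.mp h4).resolve_left (ne_of_gt hν₁)
    exact bdry₁ 0 hv1b h1p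
  · -- both field components are positive in the interior
    have hu_pos : ∀ x, 0 < u x := by
      intro x
      rcases (hupos x).lt_or_eq with h | h
      · exact h
      · exfalso
        have hmin : IsLocalMin u x :=
          Filter.Eventually.of_forall fun t => by rw [← h]; exact hupos t
        have hder1 : deriv u x = 0 := hmin.deriv_eq_zero
        have hder2 : 0 ≤ deriv (deriv u) x := second_deriv_test hu hmin
        have hL := hL0 x
        unfold L0 at hL
        rw [hder1, ← h] at hL
        have hb1 : 0 ≤ v₁ (x, 0) := hv₁pos (x, 0) (le_refl (0:ℝ))
        have hb2 : 0 ≤ v₂ (x, 0) := hv₂pos (x, 0) (le_refl (0:ℝ))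
        have h2 : ν₁ * v₁ (x, 0) ≤ 0 := by
          nlinarith [mul_nonneg hD.le hder2, mul_nonneg hν₂.le hb2]
        have h3 : 0 ≤ ν₁ * v₁ (x, 0) := mul_nonneg hν₁.le hb1
        have h4 : ν₁ * v₁ (x, 0) = 0 := le_antisymm h2 h3
        have h5 : v₁ (x, 0) = 0 := (mul_eq_zero.mp h4).resolve_left (ne_of_gt hν₁)
        exact bdry₁ x h5 h1p
    have hv1HP : ∀ p ∈ HP, 0 < v₁ p := by
      intro p hp
      have hp' : (0:ℝ) ≤ p.2 := hp
      rcases lt_or_eq_of_le hp' with h | h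
      · exact h1p p h
      · rcases (hv₁pos p hp).lt_or_eq with h' | h'
        · exact h'
        · exfalso
          apply bdry₁ p.1 _ h1p
          rw [show ((p.1, (0:ℝ)) : ℝ × ℝ) = p from Prod.ext rfl h]
          exact h'.symm
    have hv2HP : ∀ p ∈ HP, 0 < v₂ p := by
      intro p hp
      have hp' : (0:ℝ) ≤ p.2 := hp
      rcases lt_or_eq_of_le hp' with h | h
      · exact h2p p h
      · rcases (hv₂pos p hp).lt_or_eq with h' | h'
        · exact h'
        · exfalso
          apply bdry₂ p.1 _ h2p
          rw [show ((p.1, (0:ℝ)) : ℝ × ℝ) = p from Prod.ext rfl h]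
          exact h'.symm
    exact Or.inr ⟨hu_pos, hv1HP, hv2HP⟩
end
end

section
/- (Lipschitz continuity of λ₁ in the zeroth-order coefficients.) Regard the generalized principal eigenvalue as a function (a₁, a₂) ↦ λ₁(a₁, a₂), all other parameters being fixed. Then for every K > 0 there exists a constant C > 0 such that for all pairs (a₁, a₂) and (ã₁, ã₂) of functions ℝ × [0,∞) → ℝ that are bounded in absolute value by K and Lipschitz continuous with Lipschitz constant at most K, one has |λ₁(a₁, a₂) − λ₁(ã₁, ã₂)| ≤ C · max{ sup |a₁ − ã₁|, sup |a₂ − ã₂| }. -/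
open Set MeasureTheory Filter

noncomputable section

/-- Shifting lemma: a supersolution for `(a₁, a₂)` is a supersolution for `(b₁, b₂)`
after lowering `lam` by a uniform bound `δ` on `|aᵢ - bᵢ|`. -/
lemma glSet_shift (D d₁ d₂ ν₁ ν₂ μ₁ μ₂ c c₁ c₂ : ℝ) (a₁ a₂ b₁ b₂ : ℝ × ℝ → ℝ)
    (δ : ℝ) (hδ : 0 ≤ δ)
    (h1 : ∀ p ∈ HP, |a₁ p - b₁ p| ≤ δ) (h2 : ∀ p ∈ HP, |a₂ p - b₂ p| ≤ δ)
    {lam : ℝ} (hlam : lam ∈ glSet D d₁ d₂ ν₁ ν₂ μ₁ μ₂ c c₁ c₂ a₁ a₂) :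
    lam - δ ∈ glSet D d₁ d₂ ν₁ ν₂ μ₁ μ₂ c c₁ c₂ b₁ b₂ := by
  obtain ⟨u, v₁, v₂, hu, hv₁, hv₂, hu0, hv₁0, hv₂0, hnt, hL0, hL1, hL2, hB1, hB2⟩ := hlam
  refine ⟨u, v₁, v₂, hu, hv₁, hv₂, hu0, hv₁0, hv₂0, hnt, ?_, ?_, ?_, hB1, hB2⟩
  · intro x
    have := hL0 x
    have hux := hu0 x
    nlinarith [mul_nonneg hδ hux]
  · intro x y hy
    have hHP : ((x, y) : ℝ × ℝ) ∈ HP := le_of_lt hy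
    have h := hL1 x y hy
    have hv : 0 ≤ v₁ (x, y) := hv₁0 _ hHP
    have hd := abs_le.1 (h1 _ hHP)
    have key : Lf d₁ c₁ b₁ v₁ x y
        = Lf d₁ c₁ a₁ v₁ x y + (b₁ (x, y) - a₁ (x, y)) * v₁ (x, y) := by
      simp only [Lf]; ring
    rw [key]
    nlinarith [mul_nonneg hδ hv]
  · intro x y hy
    have hHP : ((x, y) : ℝ × ℝ) ∈ HP := le_of_lt hy
    have h := hL2 x y hy
    have hv : 0 ≤ v₂ (x, y) := hv₂0 _ hHP
    have hd := abs_le.1 (h2 _ hHP)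
    have key : Lf d₂ c₂ b₂ v₂ x y
        = Lf d₂ c₂ a₂ v₂ x y + (b₂ (x, y) - a₂ (x, y)) * v₂ (x, y) := by
      simp only [Lf]; ring
    rw [key]
    nlinarith [mul_nonneg hδ hv]

/-- `-K` always belongs to the admissible set when `|aᵢ| ≤ K` on the half-plane:
take `u ≡ 1`, `vᵢ ≡ μᵢ/νᵢ`. -/
lemma neg_K_mem_glSet (D d₁ d₂ ν₁ ν₂ μ₁ μ₂ : ℝ)
    (hν₁ : 0 < ν₁) (hν₂ : 0 < ν₂) (hμ₁ : 0 < μ₁) (hμ₂ : 0 < μ₂)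
    (c c₁ c₂ : ℝ) (a₁ a₂ : ℝ × ℝ → ℝ) (K : ℝ) (hK : 0 < K)
    (ha₁ : ∀ p ∈ HP, |a₁ p| ≤ K) (ha₂ : ∀ p ∈ HP, |a₂ p| ≤ K) :
    -K ∈ glSet D d₁ d₂ ν₁ ν₂ μ₁ μ₂ c c₁ c₂ a₁ a₂ := by
  have hα₁ : (0:ℝ) ≤ μ₁ / ν₁ := le_of_lt (div_pos hμ₁ hν₁)
  have hα₂ : (0:ℝ) ≤ μ₂ / ν₂ := le_of_lt (div_pos hμ₂ hν₂)
  refine ⟨fun _ => 1, fun _ => μ₁ / ν₁, fun _ => μ₂ / ν₂,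
    contDiff_const, contDiff_const, contDiff_const,
    fun _ => zero_le_one, fun _ _ => hα₁, fun _ _ => hα₂,
    fun h => by simpa using h.1 0, ?_, ?_, ?_, ?_, ?_⟩
  · intro x
    have : ν₁ * (μ₁ / ν₁) = μ₁ := by field_simp
    have h2 : ν₂ * (μ₂ / ν₂) = μ₂ := by field_simp
    simp only [L0, deriv_const', this, h2]
    simp
    linarith
  · intro x y hy
    have ha := abs_le.1 (ha₁ (x, y) (le_of_lt hy))
    simp only [Lf, lap, pdx, pdy, deriv_const']
    have : a₁ (x, y) * (μ₁ / ν₁) + -K * (μ₁ / ν₁) = (a₁ (x, y) - K) * (μ₁ / ν₁) := by ring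
    nlinarith [mul_nonpos_of_nonpos_of_nonneg (by linarith : a₁ (x, y) - K ≤ 0) hα₁]
  · intro x y hy
    have ha := abs_le.1 (ha₂ (x, y) (le_of_lt hy))
    simp only [Lf, lap, pdx, pdy, deriv_const']
    nlinarith [mul_nonpos_of_nonpos_of_nonneg (by linarith : a₂ (x, y) - K ≤ 0) hα₂]
  · intro x
    have : ν₁ * (μ₁ / ν₁) = μ₁ := by field_simp
    simp only [Bf, pdy, deriv_const', this]
    simp
  · intro x
    have : ν₂ * (μ₂ / ν₂) = μ₂ := by field_simp
    simp only [Bf, pdy, deriv_const', this]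
    simp

/-- **Lipschitz continuity of `λ₁` in the zeroth-order coefficients**
(Proposition 1.4). -/
theorem lam1_lipschitz_in_a
    (D d₁ d₂ ν₁ ν₂ μ₁ μ₂ : ℝ) (hD : 0 < D) (hd₁ : 0 < d₁) (hd₂ : 0 < d₂)
    (hν₁ : 0 < ν₁) (hν₂ : 0 < ν₂) (hμ₁ : 0 < μ₁) (hμ₂ : 0 < μ₂)
    (c c₁ c₂ : ℝ) (K : ℝ) (hK : 0 < K) :
    ∃ C : ℝ, 0 < C ∧ ∀ a₁ a₂ b₁ b₂ : ℝ × ℝ → ℝ,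
      (∀ p ∈ HP, |a₁ p| ≤ K) → (∀ p ∈ HP, |a₂ p| ≤ K) →
      (∀ p ∈ HP, |b₁ p| ≤ K) → (∀ p ∈ HP, |b₂ p| ≤ K) →
      LipschitzOnWith (Real.toNNReal K) a₁ HP →
      LipschitzOnWith (Real.toNNReal K) a₂ HP →
      LipschitzOnWith (Real.toNNReal K) b₁ HP →
      LipschitzOnWith (Real.toNNReal K) b₂ HP →
      |lam1 D d₁ d₂ ν₁ ν₂ μ₁ μ₂ c c₁ c₂ a₁ a₂ -
          lam1 D d₁ d₂ ν₁ ν₂ μ₁ μ₂ c c₁ c₂ b₁ b₂| ≤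
        C * max (sSup ((fun p => |a₁ p - b₁ p|) '' HP))
          (sSup ((fun p => |a₂ p - b₂ p|) '' HP)) := by
  refine ⟨1, one_pos, ?_⟩
  intro a₁ a₂ b₁ b₂ ha₁ ha₂ hb₁ hb₂ _ _ _ _
  set S₁ : Set ℝ := (fun p => |a₁ p - b₁ p|) '' HP with hS₁
  set S₂ : Set ℝ := (fun p => |a₂ p - b₂ p|) '' HP with hS₂
  have hHP0 : ((0, 0) : ℝ × ℝ) ∈ HP := le_refl (0:ℝ)
  have hbdd₁ : BddAbove S₁ := by
    refine ⟨2 * K, ?_⟩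
    rintro t ⟨p, hp, rfl⟩
    have := abs_sub (a₁ p) (b₁ p)
    have h1 := ha₁ p hp; have h2 := hb₁ p hp
    calc |a₁ p - b₁ p| ≤ |a₁ p| + |b₁ p| := abs_sub _ _
      _ ≤ 2 * K := by linarith
  have hbdd₂ : BddAbove S₂ := by
    refine ⟨2 * K, ?_⟩
    rintro t ⟨p, hp, rfl⟩
    have h1 := ha₂ p hp; have h2 := hb₂ p hp
    calc |a₂ p - b₂ p| ≤ |a₂ p| + |b₂ p| := abs_sub _ _
      _ ≤ 2 * K := by linarith
  set δ : ℝ := max (sSup S₁) (sSup S₂) with hδdef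
  have hδ0 : 0 ≤ δ := by
    have : |a₁ (0,0) - b₁ (0,0)| ≤ sSup S₁ :=
      le_csSup hbdd₁ ⟨(0,0), hHP0, rfl⟩
    exact le_trans (le_trans (abs_nonneg _) this) (le_max_left _ _)
  have h1 : ∀ p ∈ HP, |a₁ p - b₁ p| ≤ δ := fun p hp =>
    le_trans (le_csSup hbdd₁ ⟨p, hp, rfl⟩) (le_max_left _ _)
  have h2 : ∀ p ∈ HP, |a₂ p - b₂ p| ≤ δ := fun p hp =>
    le_trans (le_csSup hbdd₂ ⟨p, hp, rfl⟩) (le_max_right _ _)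
  have h1' : ∀ p ∈ HP, |b₁ p - a₁ p| ≤ δ := fun p hp => by
    rw [abs_sub_comm]; exact h1 p hp
  have h2' : ∀ p ∈ HP, |b₂ p - a₂ p| ≤ δ := fun p hp => by
    rw [abs_sub_comm]; exact h2 p hp
  set A := glSet D d₁ d₂ ν₁ ν₂ μ₁ μ₂ c c₁ c₂ a₁ a₂ with hA
  set B := glSet D d₁ d₂ ν₁ ν₂ μ₁ μ₂ c c₁ c₂ b₁ b₂ with hB
  have hAne : A.Nonempty :=
    ⟨-K, neg_K_mem_glSet D d₁ d₂ ν₁ ν₂ μ₁ μ₂ hν₁ hν₂ hμ₁ hμ₂ c c₁ c₂ a₁ a₂ K hK ha₁ ha₂⟩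
  have hBne : B.Nonempty :=
    ⟨-K, neg_K_mem_glSet D d₁ d₂ ν₁ ν₂ μ₁ μ₂ hν₁ hν₂ hμ₁ hμ₂ c c₁ c₂ b₁ b₂ K hK hb₁ hb₂⟩
  have hAB : ∀ lam ∈ A, lam - δ ∈ B := fun lam hlam =>
    glSet_shift D d₁ d₂ ν₁ ν₂ μ₁ μ₂ c c₁ c₂ a₁ a₂ b₁ b₂ δ hδ0 h1 h2 hlam
  have hBA : ∀ lam ∈ B, lam - δ ∈ A := fun lam hlam =>
    glSet_shift D d₁ d₂ ν₁ ν₂ μ₁ μ₂ c c₁ c₂ b₁ b₂ a₁ a₂ δ hδ0 h1' h2' hlam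
  rw [one_mul]
  show |sSup A - sSup B| ≤ δ
  by_cases hbA : BddAbove A
  · have hbB : BddAbove B := by
      obtain ⟨M, hM⟩ := hbA
      refine ⟨M + δ, fun lam hlam => ?_⟩
      have := hM (hBA lam hlam)
      linarith
    have hAle : sSup A ≤ sSup B + δ := by
      refine csSup_le hAne fun lam hlam => ?_
      have := le_csSup hbB (hAB lam hlam)
      linarith
    have hBle : sSup B ≤ sSup A + δ := by
      refine csSup_le hBne fun lam hlam => ?_
      have := le_csSup hbA (hBA lam hlam)
      linarith
    rw [abs_sub_le_iff]
    constructor <;> linarith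
  · have hbB : ¬ BddAbove B := by
      intro hbB
      obtain ⟨M, hM⟩ := hbB
      refine hbA ⟨M + δ, fun lam hlam => ?_⟩
      have := hM (hAB lam hlam)
      linarith
    rw [Real.sSup_of_not_bddAbove hbA, Real.sSup_of_not_bddAbove hbB]
    simpa using hδ0
end
end
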